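/- arXiv:1710.08820 — 3 statements merged into one kernel-verified Lean document; each statement's English description precedes it below -/
import Mathlib

section
/- Let T : {0,1}* → {0,1}* be a binary morphism such that T(1) is not a prefix of T(01) and T(01) > T(1) lexicographically. Then T is order-reversing on infinite words: for all infinite binary words u, v with u < v lexicographically, T(u) > T(v). -/
/-- Apply a binary morphism to a finite word. -/
def applyM (T : Bool → List Bool) (w : List Bool) : List Bool := (w.map T).flatten

/-- Strict lexicographic order on finite binary words (false < true). -/
def LexLt (u v : List Bool) : Prop := List.Lex (· < ·) u v

/-- Lexicographic order: u ≤ v iff u is a prefix of v or they differ with a smaller letter. -/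
def LexLe (u v : List Bool) : Prop := List.Lex (· < ·) u v ∨ u = v

/-- Image of an infinite word under a morphism (letterwise, concatenated). -/
def applyInf (T : Bool → List Bool) (u : ℕ → Bool) : ℕ → Bool :=
  fun n => (applyM T ((List.range (n + 1)).map u)).getD n false

/-- Strict lexicographic order on infinite binary words (false < true). -/
def InfLt (u v : ℕ → Bool) : Prop := ∃ n, (∀ i < n, u i = v i) ∧ u n < v n

/-- n-fold concatenation power of a word. -/
def wpow {α : Type*} (x : List α) (n : ℕ) : List α := (List.replicate n x).flatten

/-- A word is primitive if it is not a power uⁿ with n ≥ 2. -/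
def PrimitiveW {α : Type*} (x : List α) : Prop := ∀ (u : List α) (n : ℕ), 2 ≤ n → x ≠ wpow u n

/-- A binary morphism is periodic if T(0), T(1) are powers of a common word. -/
def PeriodicM (T : Bool → List Bool) : Prop :=
  ∃ (t : List Bool) (i j : ℕ), T false = wpow t i ∧ T true = wpow t j

/-- The i-th shift of an infinite word. -/
def shiftW {α : Type*} (ω : ℕ → α) (i : ℕ) : ℕ → α := fun n => ω (i + n)

/-- The word w occurs in ω at position i. -/
def OccursAt {α : Type*} (ω : ℕ → α) (w : List α) (i : ℕ) : Prop :=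
  ∀ k < w.length, w[k]? = some (ω (i + k))

/-- w is a factor of ω. -/
def IsFactor {α : Type*} (ω : ℕ → α) (w : List α) : Prop := ∃ i, OccursAt ω w i

/-- Occurrences at i and i' of length-n factors induce the same permutation:
the relative lexicographic order of the shifts starting inside the occurrences agree. -/
def SamePermAt (ω : ℕ → Bool) (n i i' : ℕ) : Prop :=
  ∀ k < n, ∀ l < n,
    (InfLt (shiftW ω (i + k)) (shiftW ω (i + l)) ↔ InfLt (shiftW ω (i' + k)) (shiftW ω (i' + l)))

/-- Two factors of ω have the same permutation: some occurrences induce equal patterns. -/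
def SamePerm (ω : ℕ → Bool) (u v : List Bool) : Prop :=
  ∃ i i', OccursAt ω u i ∧ OccursAt ω v i' ∧ u.length = v.length ∧
    SamePermAt ω u.length i i'

/-- w is a right special factor of ω. -/
def RightSpecial (ω : ℕ → Bool) (w : List Bool) : Prop :=
  IsFactor ω (w ++ [false]) ∧ IsFactor ω (w ++ [true])

/-- w is a left special factor of ω. -/
def LeftSpecial (ω : ℕ → Bool) (w : List Bool) : Prop :=
  IsFactor ω (false :: w) ∧ IsFactor ω (true :: w)

/-- An infinite word is aperiodic: no two distinct shifts are equal. -/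
def AperiodicW {α : Type*} (ω : ℕ → α) : Prop := ∀ i j : ℕ, i ≠ j → shiftW ω i ≠ shiftW ω j

/-- A finite word has period q. -/
def HasPeriod {α : Type*} (w : List α) (q : ℕ) : Prop :=
  ∀ i, i + q < w.length → w[i]? = w[i + q]?

/-- Uniform recurrence: every long enough factor contains every short factor. -/
def UniformlyRecurrent {α : Type*} (s : ℕ → α) : Prop :=
  ∀ ℓ : ℕ, ∃ L : ℕ, ∀ w z : List α, IsFactor s w → w.length = L →
    IsFactor s z → z.length = ℓ → z <:+: w

/-- Not eventually periodic. -/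
def NotEventuallyPeriodic {α : Type*} (s : ℕ → α) : Prop :=
  ¬ ∃ p : ℕ, 1 ≤ p ∧ ∃ N : ℕ, ∀ n ≥ N, s (n + p) = s n

/-- Concatenation of a finite word with an infinite word. -/
def catInf (w : List Bool) (u : ℕ → Bool) : ℕ → Bool :=
  fun n => if h : n < w.length then w.get ⟨n, h⟩ else u (n - w.length)

/-! Write `W = T(0)T(1)` and let `k` be the first position where `T(1)` and `W` differ; as `T(1)`
is not a prefix of `W`, `T(1)_k = 0 < 1 = W_k`. By strong induction on `i ≤ k`, the image of any
word beginning with `0` agrees with `W` at position `i`: past `T(0)` it reads the image of some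
word at a position `j < k`, where that image agrees with `T(1)` (directly, or through `W`), and
`T(1)_j` is the letter of `W` at `|T(0)| + j`. So images of words beginning with `1` lie below
images of words beginning with `0`, and since words with a common prefix have images with a
common prefix, `T` reverses the order of all infinite words. -/

lemma applyM_append (T : Bool → List Bool) (w w' : List Bool) :
    applyM T (w ++ w') = applyM T w ++ applyM T w' := by
  simp [applyM]

lemma applyM_cons (T : Bool → List Bool) (a : Bool) (w : List Bool) :
    applyM T (a :: w) = T a ++ applyM T w := by
  simp [applyM]

lemma catInf_of_lt (w : List Bool) (u : ℕ → Bool) {i : ℕ} (h : i < w.length) :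
    catInf w u i = w.getD i false := by
  simp [catInf, h]

lemma catInf_length_add (w : List Bool) (u : ℕ → Bool) (j : ℕ) :
    catInf w u (w.length + j) = u j := by
  simp [catInf]

lemma catInf_mono (w : List Bool) {a b : ℕ → Bool} (h : InfLt a b) :
    InfLt (catInf w a) (catInf w b) := by
  obtain ⟨n, hagree, hlt⟩ := h
  refine ⟨w.length + n, fun i hi => ?_, by simpa only [catInf_length_add] using hlt⟩
  by_cases hiw : i < w.length
  · rw [catInf_of_lt w a hiw, catInf_of_lt w b hiw]
  · obtain ⟨j, rfl⟩ := Nat.exists_eq_add_of_le (not_lt.mp hiw)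
    rw [catInf_length_add, catInf_length_add, hagree j (by omega)]

lemma exists_getD_of_lex_of_not_prefix {a b : List Bool} (h : List.Lex (· < ·) a b)
    (hp : ¬ a <+: b) :
    ∃ k < a.length, (∀ j < k, a.getD j false = b.getD j false) ∧
      a.getD k false = false ∧ b.getD k false = true := by
  rw [← List.lt_iff_lex_lt] at h
  rcases List.lt_iff_exists.mp h with ⟨htake, -⟩ | ⟨k, hka, hkb, hagree, hlt⟩
  · exact absurd (List.prefix_iff_eq_take.mpr htake) hp
  · obtain ⟨hak, hbk⟩ := Bool.lt_iff.mp hlt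
    refine ⟨k, hka, fun j hj => ?_, ?_, ?_⟩
    · rw [List.getD_eq_getElem _ _ (hj.trans hka), List.getD_eq_getElem _ _ (hj.trans hkb),
        hagree j hj]
    · rwa [List.getD_eq_getElem _ _ hka]
    · rwa [List.getD_eq_getElem _ _ hkb]

section Morphism

variable {T : Bool → List Bool}

lemma length_le_length_applyM (hne : ∀ a, T a ≠ []) (w : List Bool) :
    w.length ≤ (applyM T w).length := by
  induction w with
  | nil => simp
  | cons a w ih =>
    have := List.length_pos_iff.mpr (hne a)
    simp only [applyM_cons, List.length_cons, List.length_append]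
    omega

lemma applyInf_eq_getD_applyM (hne : ∀ a, T a ≠ []) (u : ℕ → Bool) {i N : ℕ}
    (hi : i < N) :
    applyInf T u i = (applyM T ((List.range N).map u)).getD i false := by
  obtain ⟨d, rfl⟩ := Nat.exists_eq_add_of_le hi
  have hlen : i < (applyM T ((List.range (i + 1)).map u)).length :=
    (length_le_length_applyM hne _).trans_lt' (by simp)
  have hpre : applyM T ((List.range (i + 1)).map u) <+:
      applyM T ((List.range (i + 1 + d)).map u) := by
    rw [List.range_add (n := i + 1) (m := d), List.map_append, applyM_append]
    exact List.prefix_append _ _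
  rw [applyInf, List.getD_eq_getElem _ _ hlen,
    List.getD_eq_getElem _ _ (hlen.trans_le hpre.length_le), hpre.getElem hlen]

lemma applyInf_eq_catInf (hne : ∀ a, T a ≠ []) (u : ℕ → Bool) :
    applyInf T u = catInf (T (u 0)) (applyInf T (shiftW u 1)) := by
  funext i
  have hu : (List.range (i + 1)).map u = u 0 :: (List.range i).map (shiftW u 1) := by
    simp only [List.range_succ_eq_map, List.map_cons, List.map_map]
    congr 1
    exact List.map_congr_left fun n _ => by simp [shiftW, Nat.add_comm]
  rw [applyInf, hu, applyM_cons]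
  by_cases h : i < (T (u 0)).length
  · rw [List.getD_append _ _ _ _ h, catInf_of_lt _ _ h]
  · obtain ⟨j, rfl⟩ := Nat.exists_eq_add_of_le (not_lt.mp h)
    have := List.length_pos_iff.mpr (hne (u 0))
    rw [List.getD_append_right _ _ _ _ (by omega), Nat.add_sub_cancel_left, catInf_length_add,
      ← applyInf_eq_getD_applyM hne (shiftW u 1) (show j < (T (u 0)).length + j by omega)]

lemma applyInf_getD_of_head_true (hne : ∀ a, T a ≠ []) {x : ℕ → Bool} (hx : x 0 = true)
    {i : ℕ} (hi : i < (T true).length) :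
    applyInf T x i = (T true).getD i false := by
  rw [applyInf_eq_catInf hne, hx, catInf_of_lt _ _ hi]

lemma infLt_applyInf_of_infLt (hne : ∀ a, T a ≠ [])
    (hhead : ∀ x y : ℕ → Bool, x 0 = true → y 0 = false →
      InfLt (applyInf T x) (applyInf T y))
    {u v : ℕ → Bool} (huv : InfLt u v) : InfLt (applyInf T v) (applyInf T u) := by
  obtain ⟨n, hagree, hlt⟩ := huv
  induction n generalizing u v with
  | zero =>
    obtain ⟨hu, hv⟩ := Bool.lt_iff.mp hlt
    exact hhead v u hv hu
  | succ n ih =>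
    rw [applyInf_eq_catInf hne u, applyInf_eq_catInf hne v, hagree 0 n.succ_pos]
    refine catInf_mono _ (ih (fun i hi => hagree (1 + i) (by omega)) ?_)
    simpa only [shiftW, Nat.add_comm 1] using hlt

variable (hne : ∀ a, T a ≠ []) {k : ℕ} (hk : k < (T true).length)
  (hagree : ∀ j < k, (T true).getD j false = (T false ++ T true).getD j false)
include hne hk hagree

lemma applyInf_getD_of_head_false {y : ℕ → Bool} (hy : y 0 = false) {i : ℕ} (hik : i ≤ k) :
    applyInf T y i = (T false ++ T true).getD i false := by
  induction i using Nat.strong_induction_on generalizing y with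
  | _ i ih =>
    rw [applyInf_eq_catInf hne, hy]
    by_cases h : i < (T false).length
    · rw [catInf_of_lt _ _ h, List.getD_append _ _ _ _ h]
    · obtain ⟨j, rfl⟩ := Nat.exists_eq_add_of_le (not_lt.mp h)
      have := List.length_pos_iff.mpr (hne false)
      rw [catInf_length_add, List.getD_append_right _ _ _ _ (by omega), Nat.add_sub_cancel_left]
      cases hz : shiftW y 1 0
      · rw [ih j (by omega) hz (by omega), hagree j (by omega)]
      · exact applyInf_getD_of_head_true hne hz (by omega)

lemma infLt_applyInf_of_head (h1k : (T true).getD k false = false)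
    (h01k : (T false ++ T true).getD k false = true) {x y : ℕ → Bool} (hx : x 0 = true)
    (hy : y 0 = false) : InfLt (applyInf T x) (applyInf T y) := by
  refine ⟨k, fun j hj => ?_, ?_⟩
  · rw [applyInf_getD_of_head_true hne hx (hj.trans hk),
      applyInf_getD_of_head_false hne hk hagree hy hj.le, hagree j hj]
  · rw [applyInf_getD_of_head_true hne hx hk, applyInf_getD_of_head_false hne hk hagree hy le_rfl,
      h1k, h01k]
    exact Bool.false_lt_true

end Morphism

/-- If T(1) is not a prefix of T(01) and T(01) > T(1), then T is
order-reversing on infinite words. -/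
theorem stmt1 (T : Bool → List Bool)
    (hnp : ¬ (T true <+: applyM T [false, true]))
    (hgt : LexLt (T true) (applyM T [false, true])) :
    ∀ u v : ℕ → Bool, InfLt u v → InfLt (applyInf T v) (applyInf T u) := by
  rw [show applyM T [false, true] = T false ++ T true by simp [applyM]] at hnp hgt
  have hne : ∀ a, T a ≠ [] := by
    rintro (_ | _) h
    · exact hnp (by simp [h])
    · exact hnp (h ▸ List.nil_prefix)
  obtain ⟨k, hk, hagree, h1k, h01k⟩ := exists_getD_of_lex_of_not_prefix hgt hnp
  exact fun u v => infLt_applyInf_of_infLt hne fun x y =>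
    infLt_applyInf_of_head hne hk hagree h1k h01k
end

section
/- Let T : {0,1}* → {0,1}* be a morphism such that T(1) is not a prefix of T(01) and T(01) > T(1). Then there exist words x, y, z and an integer k ≥ 0 such that T(0) = x1y and T(1) = T(0)^k x 0 z. -/
theorem List.Lex.exists_eq_append_cons_of_not_prefix {α : Type*} {r : α → α → Prop}
    {u v : List α} (h : List.Lex r u v) (hnp : ¬ u <+: v) :
    ∃ p a u' b v', r a b ∧ u = p ++ a :: u' ∧ v = p ++ b :: v' := by
  induction h with
  | nil => exact absurd List.nil_prefix hnp
  | @cons c l₁ l₂ _ ih =>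
    obtain ⟨p, a, u', b, v', hab, rfl, rfl⟩ := ih fun hp => hnp (List.prefix_cons_inj c |>.mpr hp)
    exact ⟨c :: p, a, u', b, v', hab, rfl, rfl⟩
  | @rel a l₁ b l₂ hab => exact ⟨[], a, l₁, b, l₂, hab, rfl, rfl⟩

theorem wpow_succ {α : Type*} (t : List α) (k : ℕ) : wpow t (k + 1) = t ++ wpow t k := by
  simp [wpow, List.replicate_succ]

theorem exists_eq_wpow_append_of_append_prefix {α : Type*} {t : List α} (ht : t ≠ [])
    {b : α} : ∀ {p : List α}, p ++ [b] <+: t ++ p →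
      ∃ k x y, p = wpow t k ++ x ∧ t = x ++ b :: y
  | p, h => by
    by_cases hlen : p.length < t.length
    · obtain ⟨y, hy⟩ := List.prefix_of_prefix_length_le h (List.prefix_append t p)
        (by simpa using hlen)
      exact ⟨0, p, y, by simp [wpow], by simpa using hy.symm⟩
    · obtain ⟨q, rfl⟩ : t <+: p := List.prefix_of_prefix_length_le
        (List.prefix_append t p) ((List.prefix_append p [b]).trans h) (by simpa using hlen)
      have hq : q ++ [b] <+: t ++ q := by simpa using h
      have : q.length < (t ++ q).length := by simpa using List.length_pos_iff.mpr ht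
      obtain ⟨k, x, y, rfl, hx⟩ := exists_eq_wpow_append_of_append_prefix ht hq
      exact ⟨k + 1, x, y, by simp [wpow_succ], hx⟩
termination_by p => p.length

/-- If T(1) is not a prefix of T(01) and T(01) > T(1), then
T(0) = x1y and T(1) = T(0)^k x 0 z for some words x, y, z and k ≥ 0. -/
theorem stmt2 (T : Bool → List Bool)
    (hnp : ¬ (T true <+: applyM T [false, true]))
    (hgt : LexLt (T true) (applyM T [false, true])) :
    ∃ (x y z : List Bool) (k : ℕ),
      T false = x ++ [true] ++ y ∧
      T true = wpow (T false) k ++ x ++ [false] ++ z := by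
  have hT : applyM T [false, true] = T false ++ T true := by simp [applyM]
  rw [hT] at hnp hgt
  obtain ⟨p, a, z, b, v, hab, h1, h01⟩ := List.Lex.exists_eq_append_cons_of_not_prefix hgt hnp
  obtain ⟨rfl, rfl⟩ := Bool.lt_iff.mp hab
  have hT0 : T false ≠ [] := by
    intro h
    simp [h, h1] at h01
  have hpre : p ++ [true] <+: T false ++ p := by
    refine List.prefix_of_prefix_length_le (l₃ := T false ++ T true) ?_ ?_ ?_
    · exact ⟨v, by simp [h01]⟩
    · simp [h1]
    · simpa using List.length_pos_iff.mpr hT0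
  obtain ⟨k, x, y, rfl, hx⟩ := exists_eq_wpow_append_of_append_prefix hT0 hpre
  exact ⟨x, y, z, k, by simpa using hx, by simp [h1]⟩
end

section
/- Let ω be an infinite aperiodic binary word and suppose u = w0 and v = w1 are factors of ω of length n with the same permutation. Then w is a right special factor of ω (both w0 and w1 occur in ω). Consequently, if ω has exactly one right special factor of length n−1 for all large n, then for n sufficiently large there is at most one pair of distinct factors of length n with the same permutation. -/
/-!
Comparing consecutive shifts of an aperiodic binary word reads off letters: `ω[p..] < ω[p+1..]`
exactly when `ω p = 0`, since both shifts agree along the run of `ω p` starting at `p` and the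
first difference occurs where that run ends. Hence two occurrences with the same permutation
carry the same letters at every position `k` for which `k + 1` is still inside the occurrence,
so two distinct factors with the same permutation are `w0` and `w1` for a common `w`, which is
then right special. If right special factors are eventually unique, that `w` is determined by
the length.
-/

theorem exists_forall_lt_eq_and_ne {α : Type*} {f g : ℕ → α} (h : f ≠ g) :
    ∃ n, (∀ i < n, f i = g i) ∧ f n ≠ g n := by
  classical
  have hex : ∃ n, f n ≠ g n := Function.ne_iff.mp h
  exact ⟨Nat.find hex, fun i hi => not_not.mp (Nat.find_min hex hi), Nat.find_spec hex⟩

theorem infLt_iff_of_first_ne {u v : ℕ → Bool} {n : ℕ} (heq : ∀ i < n, u i = v i)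
    (hne : u n ≠ v n) : InfLt u v ↔ u n = false := by
  constructor
  · rintro ⟨m, hagree, hlt⟩
    obtain rfl : m = n := by
      rcases lt_trichotomy m n with hmn | hmn | hnm
      · exact absurd (heq m hmn) hlt.ne
      · exact hmn
      · exact absurd (hagree n hnm) hne
    exact (Bool.lt_iff.mp hlt).1
  · intro hu
    refine ⟨n, heq, ?_⟩
    cases hv : v n
    · exact absurd (hu.trans hv.symm) hne
    · simp [hu]

theorem AperiodicW.infLt_shiftW_succ_iff {ω : ℕ → Bool} (hap : AperiodicW ω) (p : ℕ) :
    InfLt (shiftW ω p) (shiftW ω (p + 1)) ↔ ω p = false := by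
  obtain ⟨n, heq, hne⟩ := exists_forall_lt_eq_and_ne (hap p (p + 1) p.lt_succ_self.ne)
  have hrun : ∀ j ≤ n, ω (p + j) = ω p := by
    intro j hj
    induction j with
    | zero => rfl
    | succ k ih =>
      have hk : ω (p + k) = ω (p + 1 + k) := heq k (by omega)
      rw [show p + (k + 1) = p + 1 + k by omega, ← hk, ih (by omega)]
  rw [infLt_iff_of_first_ne heq hne]
  simp only [shiftW, hrun n le_rfl]

theorem SamePermAt.apply_eq {ω : ℕ → Bool} (hap : AperiodicW ω) {n i i' : ℕ}
    (h : SamePermAt ω n i i') {k : ℕ} (hk : k + 1 < n) : ω (i + k) = ω (i' + k) := by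
  have hiff := h k (by omega) (k + 1) hk
  simp only [← Nat.add_assoc, hap.infLt_shiftW_succ_iff] at hiff
  cases ha : ω (i + k) <;> cases hb : ω (i' + k) <;> simp_all

theorem SamePerm.isFactor_left {ω : ℕ → Bool} {u v : List Bool} (h : SamePerm ω u v) :
    IsFactor ω u :=
  let ⟨i, _, hu, _⟩ := h
  ⟨i, hu⟩

theorem SamePerm.isFactor_right {ω : ℕ → Bool} {u v : List Bool} (h : SamePerm ω u v) :
    IsFactor ω v :=
  let ⟨_, i', _, hv, _⟩ := h
  ⟨i', hv⟩

theorem SamePerm.length_eq {ω : ℕ → Bool} {u v : List Bool} (h : SamePerm ω u v) :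
    u.length = v.length :=
  let ⟨_, _, _, _, hlen, _⟩ := h
  hlen

theorem SamePerm.dropLast_eq {ω : ℕ → Bool} (hap : AperiodicW ω) {u v : List Bool}
    (h : SamePerm ω u v) : u.dropLast = v.dropLast := by
  obtain ⟨i, i', hu, hv, hlen, hsp⟩ := h
  refine List.ext_getElem? fun k => ?_
  rw [List.getElem?_dropLast, List.getElem?_dropLast, ← hlen]
  split_ifs with hk
  · rw [hu k (by omega), hv k (by omega), hsp.apply_eq hap (by omega)]
  · rfl

theorem List.pair_eq_pair_of_dropLast_eq {u v : List Bool} (hlen : u.length = v.length)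
    (hd : u.dropLast = v.dropLast) (hne : u ≠ v) :
    ∃ w : List Bool, w.length + 1 = u.length ∧
      ({u, v} : Set (List Bool)) = {w ++ [false], w ++ [true]} := by
  have hu : u ≠ [] := by
    rintro rfl
    exact hne (List.length_eq_zero_iff.mp hlen.symm).symm
  have hv : v ≠ [] := by
    rintro rfl
    exact hne (List.length_eq_zero_iff.mp hlen)
  rw [← List.dropLast_append_getLast hu, ← List.dropLast_append_getLast hv, ← hd] at hne ⊢
  refine ⟨u.dropLast, by simp [Nat.sub_add_cancel (List.length_pos_iff.mpr hu)], ?_⟩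
  generalize u.getLast hu = a, v.getLast hv = b at hne ⊢
  cases a <;> cases b <;> simp_all [Set.pair_comm]

theorem SamePerm.exists_rightSpecial {ω : ℕ → Bool} (hap : AperiodicW ω) {u v : List Bool}
    (h : SamePerm ω u v) (hne : u ≠ v) :
    ∃ w : List Bool, w.length + 1 = u.length ∧ RightSpecial ω w ∧
      ({u, v} : Set (List Bool)) = {w ++ [false], w ++ [true]} := by
  obtain ⟨w, hlen, hpair⟩ := List.pair_eq_pair_of_dropLast_eq h.length_eq (h.dropLast_eq hap) hne
  have hfactor : ∀ x ∈ ({u, v} : Set (List Bool)), IsFactor ω x := by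
    rintro x (rfl | rfl)
    exacts [h.isFactor_left, h.isFactor_right]
  rw [hpair] at hfactor
  exact ⟨w, hlen, ⟨hfactor _ (by simp), hfactor _ (by simp)⟩, hpair⟩

/-- If w0 and w1 have the same permutation then w is right special;
consequently, if ω eventually has a unique right special factor of each length,
then for large n there is at most one same-permutation pair of distinct length-n
factors. -/
theorem stmt11 (ω : ℕ → Bool) (hap : AperiodicW ω) :
    (∀ w : List Bool, SamePerm ω (w ++ [false]) (w ++ [true]) → RightSpecial ω w) ∧
    ((∃ N : ℕ, ∀ n ≥ N, ∃! r : List Bool, r.length = n ∧ RightSpecial ω r) →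
      ∃ N' : ℕ, ∀ n ≥ N', ∀ u v u' v' : List Bool,
        u.length = n → v.length = n → u'.length = n → v'.length = n →
        u ≠ v → u' ≠ v' → SamePerm ω u v → SamePerm ω u' v' →
        ({u, v} : Set (List Bool)) = {u', v'}) := by
  refine ⟨fun w h => ⟨h.isFactor_left, h.isFactor_right⟩, ?_⟩
  rintro ⟨N, hN⟩
  refine ⟨N + 1, fun n hn u v u' v' hu _ hu' _ huv huv' h h' => ?_⟩
  obtain ⟨w, hw, hwr, hpair⟩ := h.exists_rightSpecial hap huv
  obtain ⟨w', hw', hwr', hpair'⟩ := h'.exists_rightSpecial hap huv'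
  obtain ⟨r, -, hr⟩ := hN w.length (by omega)
  rw [hpair, hpair', hr w ⟨rfl, hwr⟩, hr w' ⟨by omega, hwr'⟩]
end
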